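/- Let A ⊆ Q be λ-measurable with 0 < λ(A) < ∞, with d(x) > 0 for λ-almost every x ∈ A, and set δ := inf_{x ∈ A} d(x) and d̄(A) := (1/λ(A)) ∫_A d(x) dλ(x); assume 0 < d̄(A) < ∞. Let h_A be the probability measure on A given by dh_A(x) = (d(x)/(d̄(A) λ(A))) dλ(x). Let S be an expanding search on Q such that x ↦ T(S,x) is λ-measurable, and suppose that for every t, if S(t) ∩ A ≠ ∅ then λ(S(t) \ A) ≥ δ (this holds on a network, where each S(t) is a connected set containing O). Then the expected normalized search time of S against the Hider strategy h_A satisfies ∫_A (T(S,x)/d(x)) dh_A(x) ≥ (δ + λ(A)/2)/d̄(A). -/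

import Mathlib

/-! If `x ∈ A` is found at time `T x`, the search region at that moment contains every point of
`A` found no later than `x` together with mass at least `δ` outside `A`, so
`T x ≥ δ + λ {y ∈ A | T y ≤ T x}`. Averaged over `x` uniform on `A`, the last term is at least
`λ(A)/2`, since `{T y ≤ T x}` and `{T x ≤ T y}` cover `A × A` and are exchanged by the swap.
The density `d / (d̄ λ(A))` of `h_A` cancels the normalisation by `d`, so the expected normalised
search time is the average of `T` over `A` divided by `d̄`. -/

open MeasureTheory Metric

/-- The (expanding) search time of the point `H` under the search `S`: the infimum of the
admissible times `t` (i.e. `0 ≤ t < λ(Q)`) with `H ∈ S t`, equal to `∞` if there is none. -/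
noncomputable def searchTime {Q : Type*} [MetricSpace Q] [MeasurableSpace Q]
    (μ : Measure Q) (S : ℝ → Set Q) (H : Q) : ENNReal :=
  ⨅ (t : ℝ) (_ : 0 ≤ t ∧ ENNReal.ofReal t < μ Set.univ ∧ H ∈ S t), ENNReal.ofReal t

/-- `S` is an expanding search on `Q` rooted at `O`: a family of measurable connected subsets
`S t` for `0 ≤ t < λ(Q)` with `S 0 = {O}`, nondecreasing in `t`, and `λ (S t) = t`. -/
def IsExpandingSearch {Q : Type*} [MetricSpace Q] [MeasurableSpace Q]
    (μ : Measure Q) (O : Q) (S : ℝ → Set Q) : Prop :=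
  S 0 = {O} ∧
  (∀ t : ℝ, 0 ≤ t → ENNReal.ofReal t < μ Set.univ →
    MeasurableSet (S t) ∧ IsConnected (S t) ∧ μ (S t) = ENNReal.ofReal t) ∧
  (∀ t t' : ℝ, 0 ≤ t → t ≤ t' → ENNReal.ofReal t' < μ Set.univ → S t ⊆ S t')

open scoped ENNReal

section Sublevel

variable {Q α : Type*} [MeasurableSpace Q] [LinearOrder α] [TopologicalSpace α]
  [OrderClosedTopology α] [SecondCountableTopology α] [MeasurableSpace α] [OpensMeasurableSpace α]

theorem measure_univ_sq_div_two_le_lintegral_measure_setOf_le (ν : Measure Q) [SFinite ν]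
    {T : Q → α} (hT : Measurable T) :
    ν Set.univ ^ 2 / 2 ≤ ∫⁻ x, ν {y | T y ≤ T x} ∂ν := by
  set E := {p : Q × Q | T p.2 ≤ T p.1}
  have hE : MeasurableSet E := measurableSet_le (hT.comp measurable_snd) (hT.comp measurable_fst)
  have hswap : ν.prod ν (Prod.swap ⁻¹' E) = ν.prod ν E :=
    Measure.measurePreserving_swap.measure_preimage hE.nullMeasurableSet
  rw [show ∫⁻ x, ν {y | T y ≤ T x} ∂ν = ν.prod ν E from (Measure.prod_apply hE).symm,
    ENNReal.div_le_iff two_ne_zero ENNReal.ofNat_ne_top]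
  calc ν Set.univ ^ 2 = ν.prod ν Set.univ := by rw [← Set.univ_prod_univ, Measure.prod_prod, sq]
    _ ≤ ν.prod ν (E ∪ Prod.swap ⁻¹' E) :=
        measure_mono fun p _ => le_total (T p.2) (T p.1)
    _ ≤ ν.prod ν E + ν.prod ν (Prod.swap ⁻¹' E) := measure_union_le _ _
    _ = ν.prod ν E * 2 := by rw [hswap, mul_two]

end Sublevel

section ExpandingSearch

variable {Q : Type*} [MetricSpace Q] [MeasurableSpace Q] {μ : Measure Q} {O : Q} {S : ℝ → Set Q}

theorem searchTime_le {H : Q} {t : ℝ} (ht0 : 0 ≤ t) (htQ : ENNReal.ofReal t < μ Set.univ)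
    (hHt : H ∈ S t) : searchTime μ S H ≤ ENNReal.ofReal t :=
  iInf₂_le t ⟨ht0, htQ, hHt⟩

theorem exists_mem_of_searchTime_lt {H : Q} {c : ℝ≥0∞} (h : searchTime μ S H < c) :
    ∃ t, 0 ≤ t ∧ ENNReal.ofReal t < μ Set.univ ∧ H ∈ S t ∧ ENNReal.ofReal t < c := by
  obtain ⟨t, ht⟩ := iInf_lt_iff.mp h
  obtain ⟨⟨ht0, htQ, hHt⟩, htc⟩ := iInf_lt_iff.mp ht
  exact ⟨t, ht0, htQ, hHt, htc⟩

namespace IsExpandingSearch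

theorem mem_of_searchTime_lt (hS : IsExpandingSearch μ O S) {H : Q} {t : ℝ}
    (htQ : ENNReal.ofReal t < μ Set.univ) (h : searchTime μ S H < ENNReal.ofReal t) :
    H ∈ S t := by
  obtain ⟨s, hs0, -, hHs, hst⟩ := exists_mem_of_searchTime_lt h
  exact hS.2.2 s t hs0 ((ENNReal.ofReal_lt_ofReal_iff'.mp hst).1.le) htQ hHs

variable {A : Set Q} {δ : ℝ≥0∞}

theorem add_measure_le_of_searchTime_lt (hS : IsExpandingSearch μ O S) (hA : MeasurableSet A)
    (hδ : ∀ t : ℝ, 0 ≤ t → ENNReal.ofReal t < μ Set.univ → (S t ∩ A).Nonempty → δ ≤ μ (S t \ A))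
    {x : Q} (hx : x ∈ A) {t : ℝ} (ht0 : 0 ≤ t) (htQ : ENNReal.ofReal t < μ Set.univ)
    (hxt : searchTime μ S x < ENNReal.ofReal t) :
    δ + μ ({y | searchTime μ S y ≤ searchTime μ S x} ∩ A) ≤ ENNReal.ofReal t := by
  have hfound : {y | searchTime μ S y ≤ searchTime μ S x} ∩ A ⊆ S t ∩ A :=
    fun y ⟨hy, hyA⟩ => ⟨hS.mem_of_searchTime_lt htQ (hy.trans_lt hxt), hyA⟩
  calc δ + μ ({y | searchTime μ S y ≤ searchTime μ S x} ∩ A)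
      ≤ μ (S t \ A) + μ (S t ∩ A) :=
        add_le_add (hδ t ht0 htQ ⟨x, hS.mem_of_searchTime_lt htQ hxt, hx⟩) (measure_mono hfound)
    _ = μ (S t) := by rw [add_comm, measure_inter_add_sdiff _ hA]
    _ = ENNReal.ofReal t := (hS.2.1 t ht0 htQ).2.2

theorem add_measure_le_searchTime (hS : IsExpandingSearch μ O S) (hA : MeasurableSet A)
    (hδ : ∀ t : ℝ, 0 ≤ t → ENNReal.ofReal t < μ Set.univ → (S t ∩ A).Nonempty → δ ≤ μ (S t \ A))
    {x : Q} (hx : x ∈ A) :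
    δ + μ ({y | searchTime μ S y ≤ searchTime μ S x} ∩ A) ≤ searchTime μ S x := by
  refine le_of_forall_gt_imp_ge_of_dense fun c hc => ?_
  obtain ⟨t, ht0, htQ, hxt, htc⟩ := exists_mem_of_searchTime_lt hc
  obtain ⟨r, hr0, htr, hrc, hrQ⟩ :
      ∃ r, 0 ≤ r ∧ _ ∧ ENNReal.ofReal r < c ∧ ENNReal.ofReal r < μ Set.univ := by
    simpa only [lt_min_iff] using ENNReal.lt_iff_exists_real_btwn.mp (lt_min htc htQ)
  calc δ + μ ({y | searchTime μ S y ≤ searchTime μ S x} ∩ A)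
      ≤ ENNReal.ofReal r := hS.add_measure_le_of_searchTime_lt hA hδ hx hr0 hrQ
        ((searchTime_le ht0 htQ hxt).trans_lt htr)
    _ ≤ c := hrc.le

theorem mul_measure_le_lintegral_searchTime (hS : IsExpandingSearch μ O S)
    (hmeas : Measurable (searchTime μ S)) (hA : MeasurableSet A) (hfin : μ A ≠ ∞)
    (hδ : ∀ t : ℝ, 0 ≤ t → ENNReal.ofReal t < μ Set.univ → (S t ∩ A).Nonempty → δ ≤ μ (S t \ A)) :
    (δ + μ A / 2) * μ A ≤ ∫⁻ x in A, searchTime μ S x ∂μ := by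
  have : IsFiniteMeasure (μ.restrict A) := isFiniteMeasure_restrict.mpr hfin
  have hsublevel := measure_univ_sq_div_two_le_lintegral_measure_setOf_le (μ.restrict A) hmeas
  rw [Measure.restrict_apply_univ] at hsublevel
  calc (δ + μ A / 2) * μ A = δ * μ A + μ A ^ 2 / 2 := by
        simp only [div_eq_mul_inv]; ring
    _ ≤ δ * μ A + ∫⁻ x in A, μ.restrict A {y | searchTime μ S y ≤ searchTime μ S x} ∂μ := by
        gcongr
    _ = ∫⁻ x in A, δ + μ ({y | searchTime μ S y ≤ searchTime μ S x} ∩ A) ∂μ := by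
        simp only [Measure.restrict_apply' hA]
        rw [lintegral_add_left measurable_const, setLIntegral_const, mul_comm]
    _ ≤ ∫⁻ x in A, searchTime μ S x ∂μ := setLIntegral_mono' hA fun x hx =>
        hS.add_measure_le_searchTime hA hδ hx

end IsExpandingSearch

end ExpandingSearch

theorem distance_biased_hider_lower_bound_general
    {Q : Type*} [MetricSpace Q] [MeasurableSpace Q]
    (μ : Measure Q) (O : Q) (S : ℝ → Set Q) (hS : IsExpandingSearch μ O S)
    (hmeas : Measurable (searchTime μ S))
    (A : Set Q) (hA : MeasurableSet A) (hpos : 0 < μ A) (hfin : μ A < ⊤)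
    (hd : ∀ᵐ x ∂(μ.restrict A), 0 < dist O x)
    (dbar : ENNReal)
    (hδ : ∀ t : ℝ, 0 ≤ t → ENNReal.ofReal t < μ Set.univ → (S t ∩ A).Nonempty →
      ENNReal.ofReal (sInf ((fun x => dist O x) '' A)) ≤ μ (S t \ A)) :
    (ENNReal.ofReal (sInf ((fun x => dist O x) '' A)) + μ A / 2) / dbar ≤
      ∫⁻ x in A, (searchTime μ S x / ENNReal.ofReal (dist O x)) *
        (ENNReal.ofReal (dist O x) / (dbar * μ A)) ∂μ := by
  set δ := ENNReal.ofReal (sInf ((fun x => dist O x) '' A))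
  have hnormalize : ∀ᵐ x ∂μ.restrict A, searchTime μ S x / (dbar * μ A) =
      (searchTime μ S x / ENNReal.ofReal (dist O x)) *
        (ENNReal.ofReal (dist O x) / (dbar * μ A)) := by
    filter_upwards [hd] with x hx
    rw [← mul_div_assoc,
      ENNReal.div_mul_cancel (ENNReal.ofReal_pos.mpr hx).ne' ENNReal.ofReal_ne_top]
  calc (δ + μ A / 2) / dbar = (δ + μ A / 2) * μ A / (dbar * μ A) :=
        (ENNReal.mul_div_mul_right _ _ hpos.ne' hfin.ne).symm
    _ ≤ (∫⁻ x in A, searchTime μ S x ∂μ) / (dbar * μ A) := by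
        gcongr
        exact hS.mul_measure_le_lintegral_searchTime hmeas hA hfin.ne hδ
    _ = ∫⁻ x in A, searchTime μ S x / (dbar * μ A) ∂μ := (lintegral_mul_const _ hmeas).symm
    _ = _ := lintegral_congr_ae hnormalize

/-- Theorem 4.2 of the paper. Let `A` be measurable with `0 < λ(A) < ∞`,
`d(x) > 0` for λ-a.e. `x ∈ A`, `δ = inf_{x ∈ A} d(x)` and `d̄(A) = (1/λ(A)) ∫_A d dλ` with
`0 < d̄(A) < ∞`. Let `h_A` be the probability measure on `A` with density
`d(x)/(d̄(A) λ(A))` with respect to `λ`. If `S` is an expanding search (with measurable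
search-time function) such that whenever `S(t)` meets `A` one has `λ(S(t) \ A) ≥ δ`, then the
expected normalized search time of `S` against `h_A` is at least `(δ + λ(A)/2)/d̄(A)`. -/
theorem distance_biased_hider_lower_bound
    {Q : Type*} [MetricSpace Q] [MeasurableSpace Q]
    (μ : Measure Q) (O : Q) (S : ℝ → Set Q) (hS : IsExpandingSearch μ O S)
    (hmeas : Measurable (searchTime μ S))
    (A : Set Q) (hA : MeasurableSet A) (hpos : 0 < μ A) (hfin : μ A < ⊤)
    (hd : ∀ᵐ x ∂(μ.restrict A), 0 < dist O x)
    (dbar : ENNReal) (hdbar : dbar = (∫⁻ x in A, ENNReal.ofReal (dist O x) ∂μ) / μ A)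
    (hdbar_pos : 0 < dbar) (hdbar_fin : dbar < ⊤)
    (hδ : ∀ t : ℝ, 0 ≤ t → ENNReal.ofReal t < μ Set.univ → (S t ∩ A).Nonempty →
      ENNReal.ofReal (sInf ((fun x => dist O x) '' A)) ≤ μ (S t \ A)) :
    (ENNReal.ofReal (sInf ((fun x => dist O x) '' A)) + μ A / 2) / dbar ≤
      ∫⁻ x in A, (searchTime μ S x / ENNReal.ofReal (dist O x)) *
        (ENNReal.ofReal (dist O x) / (dbar * μ A)) ∂μ :=
  distance_biased_hider_lower_bound_general μ O S hS hmeas A hA hpos hfin hd dbar hδ
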